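/- Let Γ = ⟨a, b, c | a³ = b² = c² = 1, bab = a², bc = cb⟩ ≅ D₃ *_{C₂} D₂. The map a ↦ (a,1), b ↦ (b,1), c ↦ (1,−1) defines a surjective homomorphism φ : Γ → D₃ × C₂ that is injective on ⟨a,b⟩ and on ⟨b,c⟩; its kernel is a torsion-free normal subgroup of index 12, which is a free group of rank 2. -/

import Mathlib

/-!
The group `Γ` acts on `ℤ²` modulo `±1` through `PGL₂(ℤ)`: `a`, `b`, `c` act by
`(x, y) ↦ (-y, x - y)`, `(x, y) ↦ (y, x)` and `(x, y) ↦ (x, -y)`. The elements `u = c a c a⁻¹` and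
`w = b u b` then act by the transvections `(x, y) ↦ (x, y - 2x)` and `(x, y) ↦ (x - 2y, y)`, whose
nonzero powers play ping-pong on the regions `|x| < |y|` and `|y| < |x|`; so `N = ⟨u, w⟩` is free
of rank 2. Conjugation by `a`, `b`, `c` maps `u` and `w` into `N`, so `N` is normal, and `Γ ⧸ N` is
generated by images of `a`, `b`, `c` satisfying the relations of `D₃ × C₂`, so it has at most 12
elements. As `N ≤ ker φ` and `φ` is onto a group of order 12, `ker φ = N`. Being free, the kernel
is torsion-free, hence meets the finite subgroups `⟨a, b⟩` and `⟨b, c⟩` trivially.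
-/

/-- The relations of `Γ = ⟨a, b, c | a³ = b² = c² = 1, bab = a², bc = cb⟩ ≅ D₃ *_{C₂} D₂`. -/
def amalgamRels : Set (FreeGroup (Fin 3)) :=
  { (FreeGroup.of 0) ^ 3, (FreeGroup.of 1) ^ 2, (FreeGroup.of 2) ^ 2,
    FreeGroup.of 1 * FreeGroup.of 0 * FreeGroup.of 1 * ((FreeGroup.of 0) ^ 2)⁻¹,
    FreeGroup.of 1 * FreeGroup.of 2 * (FreeGroup.of 1)⁻¹ * (FreeGroup.of 2)⁻¹ }

/-- A monoid is torsion-free if every non-identity element has infinite order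
(the definition `Monoid.IsTorsionFree` of Mathlib of December 2024, since removed). -/
def Monoid.IsTorsionFree (G : Type*) [Monoid G] : Prop :=
  ∀ g : G, g ≠ 1 → ¬IsOfFinOrder g

open Subgroup in
theorem Subgroup.normal_closure_of_conj_mem {G : Type*} [Group G] {S T : Set G}
    (hT : closure T = ⊤) (hfin : ∀ t ∈ T, IsOfFinOrder t)
    (hconj : ∀ t ∈ T, ∀ s ∈ S, t * s * t⁻¹ ∈ closure S) : (closure S).Normal := by
  have hgen : ∀ t ∈ T, ∀ n ∈ closure S, t * n * t⁻¹ ∈ closure S := fun t ht n hn => by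
    have hmap : (closure S).map (MulAut.conj t).toMonoidHom ≤ closure S := by
      rw [MonoidHom.map_closure, closure_le]
      rintro _ ⟨s, hs, rfl⟩
      exact hconj t ht s hs
    exact hmap ⟨n, hn, rfl⟩
  -- Since the generators have finite order, `G` is generated by `T` as a monoid.
  have hall : ∀ g ∈ Submonoid.closure T, ∀ n ∈ closure S, g * n * g⁻¹ ∈ closure S := by
    intro g hg
    induction hg using Submonoid.closure_induction with
    | mem t ht => exact hgen t ht
    | one => simp
    | mul g h _ _ hg hh =>
      intro n hn
      simpa [mul_assoc] using hg _ (hh n hn)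
  refine ⟨fun n hn g => hall g ?_ n hn⟩
  rw [← closure_toSubmonoid_of_isOfFinOrder hfin, hT]
  trivial

theorem Subgroup.closure_subset_range_pow_mul_pow_mul_pow {G : Type*} [Group G] {x y z : G}
    (hx : x ^ 3 = 1) (hy : y ^ 2 = 1) (hz : z ^ 2 = 1) (hyx : y * x = x ^ 2 * y)
    (hxz : Commute x z) (hyz : Commute y z) :
    (closure {x, y, z} : Set G) ⊆
      Set.range fun t : Fin 3 × Fin 2 × Fin 2 => x ^ (t.1 : ℕ) * y ^ (t.2.1 : ℕ) * z ^ (t.2.2 : ℕ) := by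
  have hfin : ∀ t ∈ ({x, y, z} : Set G), IsOfFinOrder t := by
    rintro t (rfl | rfl | rfl)
    exacts [isOfFinOrder_iff_pow_eq_one.2 ⟨3, by norm_num, hx⟩,
      isOfFinOrder_iff_pow_eq_one.2 ⟨2, by norm_num, hy⟩,
      isOfFinOrder_iff_pow_eq_one.2 ⟨2, by norm_num, hz⟩]
  have hyxn : ∀ i : ℕ, y * x ^ i = x ^ (2 * i) * y := fun i => by
    rw [pow_mul]; exact (SemiconjBy.pow_right hyx i).eq
  have hwords : ∀ g ∈ Submonoid.closure {x, y, z}, ∃ i j k : ℕ, g = x ^ i * y ^ j * z ^ k := by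
    intro g hg
    induction hg using Submonoid.closure_induction_left with
    | one => exact ⟨0, 0, 0, by simp⟩
    | mul_left s hs g _ ih =>
      obtain ⟨i, j, k, rfl⟩ := ih
      rcases hs with rfl | rfl | rfl
      · exact ⟨i + 1, j, k, by simp only [pow_succ', mul_assoc]⟩
      · refine ⟨2 * i, j + 1, k, ?_⟩
        rw [← mul_assoc, ← mul_assoc, hyxn, pow_succ', mul_assoc (x ^ _)]
      · refine ⟨i, j, k + 1, ?_⟩
        rw [pow_succ', ← mul_assoc, ← mul_assoc, ← (hxz.pow_left i).eq, mul_assoc (x ^ i),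
          ← (hyz.pow_left j).eq]
        simp only [mul_assoc]
  intro g hg
  rw [SetLike.mem_coe, ← mem_toSubmonoid, closure_toSubmonoid_of_isOfFinOrder hfin] at hg
  obtain ⟨i, j, k, rfl⟩ := hwords g hg
  refine ⟨(⟨i % 3, Nat.mod_lt _ (by norm_num)⟩, ⟨j % 2, Nat.mod_lt _ (by norm_num)⟩,
    ⟨k % 2, Nat.mod_lt _ (by norm_num)⟩), ?_⟩
  simp only [← pow_eq_pow_mod _ hx, ← pow_eq_pow_mod _ hy, ← pow_eq_pow_mod _ hz]

theorem Subgroup.eq_of_le_of_index_le {G : Type*} [Group G] {H K : Subgroup G} [H.FiniteIndex]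
    (hHK : H ≤ K) (hindex : H.index ≤ K.index) : H = K :=
  eq_of_le_of_not_lt hHK fun hlt => (index_strictAnti hlt).not_ge hindex

theorem MonoidHom.injOn_of_isMulTorsionFree_ker {G H : Type*} [Group G] [Group H] (f : G →* H)
    [IsMulTorsionFree f.ker] (K : Subgroup G) [Finite K] : Set.InjOn f K := by
  intro x hx y hy hxy
  have hker : x⁻¹ * y ∈ f.ker := by simp [hxy]
  have hfinG : IsOfFinOrder (x⁻¹ * y) := Submonoid.isOfFinOrder_coe.mpr
    (isOfFinOrder_of_finite (⟨x⁻¹ * y, K.mul_mem (K.inv_mem hx) hy⟩ : K))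
  have hfin : IsOfFinOrder (⟨x⁻¹ * y, hker⟩ : f.ker) := Submonoid.isOfFinOrder_coe.mp hfinG
  by_contra hne
  refine not_isOfFinOrder_of_isMulTorsionFree ?_ hfin
  simpa [Subtype.ext_iff, inv_mul_eq_one] using hne

theorem Equiv.Perm.zpow_apply_of_map_succ {α : Type*} (f : Equiv.Perm α) (g : ℤ → α)
    (h : ∀ m, f (g m) = g (m + 1)) (n : ℤ) : (f ^ n) (g 0) = g n := by
  induction n using Int.induction_on with
  | zero => simp
  | succ n ih => rw [add_comm, zpow_add, Equiv.Perm.mul_apply, zpow_one, ih, h, add_comm]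
  | pred n ih =>
    apply f.injective
    rw [← Equiv.Perm.mul_apply, ← zpow_one_add, show 1 + (-(n : ℤ) - 1) = -n by ring, ih, h,
      sub_add_cancel]

open Cardinal Pointwise Function in
theorem FreeGroup.injective_lift_of_ping_pong_zpow {ι : Type*} [Nontrivial ι] {G : Type*}
    [Group G] {α : Type*} [MulAction G α] (a : ι → G) (X : ι → Set α)
    (hXnonempty : ∀ i, (X i).Nonempty) (hXdisj : Pairwise (Disjoint on X))
    (hpp : ∀ i j, i ≠ j → ∀ n : ℤ, n ≠ 0 → (a i ^ n) • X j ⊆ X i) :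
    Injective (FreeGroup.lift a) := by
  have hlift : FreeGroup.lift a = (Monoid.CoprodI.lift fun i => FreeGroup.lift fun _ => a i).comp
      freeGroupEquivCoprodI.toMonoidHom := by
    ext i; simp
  rw [hlift, MonoidHom.coe_comp]
  refine Injective.comp ?_ (MulEquiv.injective _)
  refine Monoid.CoprodI.lift_injective_of_ping_pong _ ?_ X hXnonempty hXdisj ?_
  · refine Or.inr ⟨Classical.arbitrary ι, ?_⟩
    rw [mk_congr FreeGroup.freeGroupUnitEquivInt, mk_int]
    exact natCast_lt_aleph0.le
  · intro i j hij h hne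
    obtain ⟨n, rfl⟩ : ∃ n : ℤ, FreeGroup.of () ^ n = h :=
      ⟨_, FreeGroup.freeGroupUnitEquivInt.symm_apply_apply h⟩
    have hn : n ≠ 0 := by rintro rfl; exact hne (zpow_zero _)
    simpa using hpp i j hij n hn

theorem Int.abs_lt_abs_sub_two_mul {x y n : ℤ} (hn : n ≠ 0) (h : |y| < |x|) :
    |x| < |y - 2 * n * x| := by
  have h1 : 1 ≤ |n| := Int.one_le_abs hn
  calc |x| < 2 * |n| * |x| - |y| := by nlinarith [abs_nonneg x]
    _ = |2 * n * x| - |y| := by simp [abs_mul]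
    _ ≤ |y - 2 * n * x| := by rw [abs_sub_comm]; exact abs_sub_abs_le_abs_sub _ _

def signSetoid : Setoid (ℤ × ℤ) where
  r p q := p = q ∨ p = -q
  iseqv := ⟨fun _ => Or.inl rfl, by rintro p q (rfl | rfl) <;> simp,
    by rintro p q r (rfl | rfl) (rfl | rfl) <;> simp⟩

def PlaneModSign : Type := Quotient signSetoid

namespace PlaneModSign

def mk (p : ℤ × ℤ) : PlaneModSign := Quotient.mk signSetoid p

lemma mk_surjective : Function.Surjective mk := Quotient.mk_surjective

@[simp] lemma mk_neg (x y : ℤ) : mk (-x, -y) = mk (x, y) := Quotient.sound (Or.inr rfl)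

lemma ext_mk {f g : Equiv.Perm PlaneModSign} (h : ∀ x y : ℤ, f (mk (x, y)) = g (mk (x, y))) :
    f = g :=
  Equiv.ext fun q => by obtain ⟨⟨x, y⟩, rfl⟩ := mk_surjective q; exact h x y

def descend (e : Equiv.Perm (ℤ × ℤ)) (he : ∀ p, e (-p) = -e p) : Equiv.Perm PlaneModSign where
  toFun := Quotient.map e (by rintro p q (rfl | rfl); exacts [Or.inl rfl, Or.inr (he q)])
  invFun := Quotient.map e.symm (by
    rintro p q (rfl | rfl)
    · exact Or.inl rfl
    · exact Or.inr (e.injective (by simp [he])))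
  left_inv q := Quotient.inductionOn q fun p => congrArg (Quotient.mk _) (e.symm_apply_apply p)
  right_inv q := Quotient.inductionOn q fun p => congrArg (Quotient.mk _) (e.apply_symm_apply p)

def rotate : Equiv.Perm PlaneModSign :=
  descend ⟨fun p => (-p.2, p.1 - p.2), fun p => (p.2 - p.1, -p.1), fun _ => by ext <;> simp,
    fun _ => by ext <;> simp⟩ fun _ => by ext <;> simp; ring

def swap : Equiv.Perm PlaneModSign := descend (Equiv.prodComm ℤ ℤ) fun _ => by simp

def reflect : Equiv.Perm PlaneModSign :=
  descend ((Equiv.refl ℤ).prodCongr (Equiv.neg ℤ)) fun _ => by ext <;> simp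

@[simp] lemma rotate_mk (x y : ℤ) : rotate (mk (x, y)) = mk (-y, x - y) := rfl
@[simp] lemma rotate_symm_mk (x y : ℤ) : rotate.symm (mk (x, y)) = mk (y - x, -x) := rfl
@[simp] lemma swap_mk (x y : ℤ) : swap (mk (x, y)) = mk (y, x) := rfl
@[simp] lemma swap_symm_mk (x y : ℤ) : swap.symm (mk (x, y)) = mk (y, x) := rfl
@[simp] lemma reflect_mk (x y : ℤ) : reflect (mk (x, y)) = mk (x, -y) := rfl
@[simp] lemma reflect_symm_mk (x y : ℤ) : reflect.symm (mk (x, y)) = mk (x, -y) := rfl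

def absCoords : PlaneModSign → ℤ × ℤ :=
  Quotient.lift (fun p => (|p.1|, |p.2|)) (by rintro p q (rfl | rfl) <;> simp)

@[simp] lemma absCoords_mk (x y : ℤ) : absCoords (mk (x, y)) = (|x|, |y|) := rfl

end PlaneModSign

namespace Amalgam

abbrev Γ := PresentedGroup amalgamRels

def a : Γ := PresentedGroup.of 0
def b : Γ := PresentedGroup.of 1
def c : Γ := PresentedGroup.of 2

lemma a_pow_three : a ^ 3 = 1 :=
  PresentedGroup.one_of_mem (x := FreeGroup.of 0 ^ 3) (by simp [amalgamRels])

lemma b_pow_two : b ^ 2 = 1 :=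
  PresentedGroup.one_of_mem (x := FreeGroup.of 1 ^ 2) (by simp [amalgamRels])

lemma c_pow_two : c ^ 2 = 1 :=
  PresentedGroup.one_of_mem (x := FreeGroup.of 2 ^ 2) (by simp [amalgamRels])

lemma b_mul_a_eq : b * a = a ^ 2 * b := by
  have h : b * a * b = a ^ 2 := mul_inv_eq_one.mp <| PresentedGroup.one_of_mem
    (x := FreeGroup.of 1 * FreeGroup.of 0 * FreeGroup.of 1 * (FreeGroup.of 0 ^ 2)⁻¹)
    (by simp [amalgamRels])
  rw [← h, mul_assoc, ← sq, b_pow_two, mul_one]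

lemma commute_b_c : Commute b c :=
  mul_inv_eq_iff_eq_mul.mp <| mul_inv_eq_one.mp <| PresentedGroup.one_of_mem
    (x := FreeGroup.of 1 * FreeGroup.of 2 * (FreeGroup.of 1)⁻¹ * (FreeGroup.of 2)⁻¹)
    (by simp [amalgamRels])

lemma a_mul_a_mul_a_mul (x : Γ) : a * (a * (a * x)) = x := by
  rw [← mul_assoc, ← mul_assoc, ← pow_three', a_pow_three, one_mul]

lemma b_mul_b_mul (x : Γ) : b * (b * x) = x := by rw [← mul_assoc, ← sq, b_pow_two, one_mul]

lemma c_mul_c_mul (x : Γ) : c * (c * x) = x := by rw [← mul_assoc, ← sq, c_pow_two, one_mul]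

lemma b_mul_a_mul (x : Γ) : b * (a * x) = a * (a * (b * x)) := by
  rw [← mul_assoc, b_mul_a_eq, sq]; simp only [mul_assoc]

lemma b_mul_c_mul (x : Γ) : b * (c * x) = c * (b * x) := by
  rw [← mul_assoc, commute_b_c.eq, mul_assoc]

lemma a_inv : a⁻¹ = a * a := by
  rw [inv_eq_iff_mul_eq_one, ← mul_assoc, ← pow_three', a_pow_three]

lemma b_inv : b⁻¹ = b := inv_eq_of_mul_eq_one_right (by rw [← sq, b_pow_two])

lemma c_inv : c⁻¹ = c := inv_eq_of_mul_eq_one_right (by rw [← sq, c_pow_two])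

lemma closure_a_b_c : Subgroup.closure {a, b, c} = ⊤ := by
  rw [← PresentedGroup.closure_range_of amalgamRels]
  congr 1
  ext x
  simp [Fin.exists_fin_succ, a, b, c, eq_comm]

lemma isOfFinOrder_of_mem_a_b_c {x : Γ} (hx : x ∈ ({a, b, c} : Set Γ)) : IsOfFinOrder x := by
  rcases hx with rfl | rfl | rfl
  exacts [isOfFinOrder_iff_pow_eq_one.2 ⟨3, by norm_num, a_pow_three⟩,
    isOfFinOrder_iff_pow_eq_one.2 ⟨2, by norm_num, b_pow_two⟩,
    isOfFinOrder_iff_pow_eq_one.2 ⟨2, by norm_num, c_pow_two⟩]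

def u : Γ := c * a * c * a⁻¹
def w : Γ := b * u * b

def N : Subgroup Γ := Subgroup.closure {u, w}

lemma eq_of_forall_mul_eq {x y : Γ} (h : ∀ t : Γ, x * t = y * t) : x = y := by simpa using h 1

-- With an arbitrary right factor `t`, the rules `b * (a * t) = a * (a * (b * t))` etc. rewrite
-- both sides to the same normal form.
lemma conj_identities :
    a * u * a⁻¹ = u⁻¹ * w ∧ a * w * a⁻¹ = u⁻¹ ∧ b * u * b⁻¹ = w ∧ b * w * b⁻¹ = u ∧
      c * u * c⁻¹ = u⁻¹ ∧ c * w * c⁻¹ = w⁻¹ := by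
  refine ⟨?_, ?_, ?_, ?_, ?_, ?_⟩ <;> refine eq_of_forall_mul_eq fun t => ?_ <;>
    simp only [u, w, mul_inv_rev, a_inv, b_inv, c_inv, mul_assoc, a_mul_a_mul_a_mul, b_mul_b_mul,
      c_mul_c_mul, b_mul_a_mul, b_mul_c_mul]

instance N_normal : N.Normal := by
  refine Subgroup.normal_closure_of_conj_mem closure_a_b_c (fun _ => isOfFinOrder_of_mem_a_b_c) ?_
  have hu : u ∈ N := Subgroup.subset_closure (Or.inl rfl)
  have hw : w ∈ N := Subgroup.subset_closure (Or.inr rfl)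
  obtain ⟨hau, haw, hbu, hbw, hcu, hcw⟩ := conj_identities
  rintro t (rfl | rfl | rfl) s (rfl | rfl)
  · rw [hau]; exact mul_mem (inv_mem hu) hw
  · rw [haw]; exact inv_mem hu
  · rw [hbu]; exact hw
  · rw [hbw]; exact hu
  · rw [hcu]; exact inv_mem hu
  · rw [hcw]; exact inv_mem hw

lemma exists_surjective_fin_to_quotient_N :
    ∃ f : Fin 3 × Fin 2 × Fin 2 → Γ ⧸ N, Function.Surjective f := by
  let π := QuotientGroup.mk' N
  have hac : Commute (π a) (π c) := by
    have hu : π (c * a * (a * c)⁻¹) = 1 := by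
      rw [show c * a * (a * c)⁻¹ = u by simp only [u, mul_inv_rev, c_inv, mul_assoc]]
      exact (QuotientGroup.eq_one_iff u).mpr (Subgroup.subset_closure (Or.inl rfl))
    rw [map_mul, map_inv, mul_inv_eq_one, map_mul, map_mul] at hu
    exact hu.symm
  have hgen : Subgroup.closure {π a, π b, π c} = ⊤ := by
    rw [← Set.image_pair, ← Set.image_insert_eq, ← MonoidHom.map_closure, closure_a_b_c,
      ← MonoidHom.range_eq_map, MonoidHom.range_eq_top]
    exact QuotientGroup.mk'_surjective N
  have hwords := Subgroup.closure_subset_range_pow_mul_pow_mul_pow (x := π a) (y := π b)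
    (z := π c) (by rw [← map_pow, a_pow_three, map_one]) (by rw [← map_pow, b_pow_two, map_one])
    (by rw [← map_pow, c_pow_two, map_one]) (by rw [← map_pow, ← map_mul, ← map_mul, b_mul_a_eq])
    hac (commute_b_c.map π)
  rw [hgen] at hwords
  exact ⟨_, fun _ => hwords trivial⟩

lemma index_N_le : N.index ≤ 12 := by
  obtain ⟨f, hf⟩ := exists_surjective_fin_to_quotient_N
  simpa [Subgroup.index] using Nat.card_le_card_of_surjective f hf

instance : N.FiniteIndex := by
  obtain ⟨f, hf⟩ := exists_surjective_fin_to_quotient_N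
  have := Finite.of_surjective f hf
  exact Subgroup.finiteIndex_of_finite_quotient

def φ : Γ →* Equiv.Perm (Fin 3) × Multiplicative (ZMod 2) :=
  PresentedGroup.toGroup (f := ![(finRotate 3, 1), (Equiv.swap 0 1, 1), (1, .ofAdd 1)]) <| by
    rintro r (rfl | rfl | rfl | rfl | rfl) <;> decide

lemma φ_a : φ a = (finRotate 3, 1) := PresentedGroup.toGroup.of _
lemma φ_b : φ b = (Equiv.swap 0 1, 1) := PresentedGroup.toGroup.of _
lemma φ_c : φ c = (1, .ofAdd 1) := PresentedGroup.toGroup.of _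

lemma φ_surjective : Function.Surjective φ := by
  have hwords : ∀ q : Equiv.Perm (Fin 3) × Multiplicative (ZMod 2), ∃ t : Fin 3 × Fin 2 × Fin 2,
      (finRotate 3, (1 : Multiplicative (ZMod 2))) ^ (t.1 : ℕ) * (Equiv.swap 0 1, 1) ^ (t.2.1 : ℕ) *
        (1, Multiplicative.ofAdd 1) ^ (t.2.2 : ℕ) = q := by
    decide
  intro q
  obtain ⟨t, rfl⟩ := hwords q
  exact ⟨a ^ (t.1 : ℕ) * b ^ (t.2.1 : ℕ) * c ^ (t.2.2 : ℕ), by simp [φ_a, φ_b, φ_c]⟩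

lemma index_ker_φ : φ.ker.index = 12 := by
  rw [Subgroup.index_ker, MonoidHom.range_eq_top.mpr φ_surjective, Subgroup.card_top,
    Nat.card_eq_fintype_card]
  rfl

lemma N_le_ker_φ : N ≤ φ.ker := by
  rw [N, Subgroup.closure_le]
  rintro t (rfl | rfl) <;>
    simp only [SetLike.mem_coe, MonoidHom.mem_ker, u, w, map_mul, map_inv, φ_a, φ_b, φ_c] <;>
    decide

lemma ker_φ_eq_N : φ.ker = N :=
  (Subgroup.eq_of_le_of_index_le N_le_ker_φ (index_ker_φ ▸ index_N_le)).symm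

open PlaneModSign

def ρ : Γ →* Equiv.Perm PlaneModSign :=
  PresentedGroup.toGroup (f := ![rotate, swap, reflect]) <| by
    rintro r (rfl | rfl | rfl | rfl | rfl) <;> refine ext_mk fun x y => ?_ <;>
      simp [pow_succ] <;> ring_nf

lemma ρ_a : ρ a = rotate := PresentedGroup.toGroup.of _
lemma ρ_b : ρ b = swap := PresentedGroup.toGroup.of _
lemma ρ_c : ρ c = reflect := PresentedGroup.toGroup.of _

lemma ρ_u_mk (x y : ℤ) : ρ u (mk (x, y)) = mk (x, y - 2 * x) := by
  simp only [u, map_mul, map_inv, ρ_a, ρ_c, Equiv.Perm.mul_apply, Equiv.Perm.inv_def,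
    rotate_symm_mk, reflect_mk, rotate_mk]
  rw [← mk_neg]
  congr 2 <;> ring

lemma ρ_w_mk (x y : ℤ) : ρ w (mk (x, y)) = mk (x - 2 * y, y) := by
  simp [w, ρ_b, ρ_u_mk]

lemma ρ_u_zpow_mk (n x y : ℤ) : (ρ u ^ n) (mk (x, y)) = mk (x, y - 2 * n * x) := by
  simpa using (ρ u).zpow_apply_of_map_succ (fun m => mk (x, y - 2 * m * x))
    (fun m => by rw [ρ_u_mk]; congr 2; ring) n

lemma ρ_w_zpow_mk (n x y : ℤ) : (ρ w ^ n) (mk (x, y)) = mk (x - 2 * n * y, y) := by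
  simpa using (ρ w).zpow_apply_of_map_succ (fun m => mk (x - 2 * m * y, y))
    (fun m => by rw [ρ_w_mk]; congr 2; ring) n

def pingPongSets : Fin 2 → Set PlaneModSign :=
  ![{q | (absCoords q).1 < (absCoords q).2}, {q | (absCoords q).2 < (absCoords q).1}]

lemma injective_lift_ρ_u_ρ_w : Function.Injective (FreeGroup.lift ![ρ u, ρ w]) := by
  refine FreeGroup.injective_lift_of_ping_pong_zpow _ pingPongSets ?_ ?_ ?_
  · intro i
    fin_cases i
    exacts [⟨mk (0, 1), by simp [pingPongSets]⟩, ⟨mk (1, 0), by simp [pingPongSets]⟩]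
  · intro i j hij
    fin_cases i <;> fin_cases j
    all_goals first
      | exact absurd rfl hij
      | exact Set.disjoint_left.2 fun q h₁ h₂ => lt_asymm (α := ℤ) h₁ h₂
  · intro i j hij n hn
    fin_cases i <;> fin_cases j
    all_goals try exact absurd rfl hij
    all_goals
      rintro _ ⟨q, hq, rfl⟩
      obtain ⟨⟨x, y⟩, rfl⟩ := mk_surjective q
      simp [pingPongSets, Equiv.Perm.smul_def, ρ_u_zpow_mk, ρ_w_zpow_mk] at hq ⊢
      exact Int.abs_lt_abs_sub_two_mul hn hq

def ι : FreeGroup (Fin 2) →* Γ := FreeGroup.lift ![u, w]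

lemma ι_injective : Function.Injective ι := by
  have hcomp : ρ.comp ι = FreeGroup.lift ![ρ u, ρ w] := by
    ext i
    fin_cases i <;> rfl
  refine Function.Injective.of_comp (f := ρ) ?_
  rw [← MonoidHom.coe_comp, hcomp]
  exact injective_lift_ρ_u_ρ_w

lemma range_ι : ι.range = N := by
  rw [ι, FreeGroup.range_lift_eq_closure, Matrix.range_cons, Matrix.range_cons, Matrix.range_empty,
    Set.union_empty, Set.singleton_union, N]

noncomputable def kerEquiv : φ.ker ≃* FreeGroup (Fin 2) :=
  (MulEquiv.subgroupCongr (ker_φ_eq_N.trans range_ι.symm)).trans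
    (MonoidHom.ofInjective ι_injective).symm

instance : IsMulTorsionFree φ.ker := kerEquiv.injective.isMulTorsionFree kerEquiv.toMonoidHom

instance : Finite (Subgroup.closure {a, b}) := by
  have hsub : ({a, b} : Set Γ) ⊆ {a, b, 1} :=
    Set.insert_subset_insert (Set.singleton_subset_iff.2 (Set.mem_insert _ _))
  have hwords := Subgroup.closure_subset_range_pow_mul_pow_mul_pow a_pow_three b_pow_two
    (one_pow 2) b_mul_a_eq (Commute.one_right a) (Commute.one_right b)
  exact ((Set.finite_range _).subset (subset_trans (Subgroup.closure_mono hsub) hwords)).to_subtype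

instance : Finite (Subgroup.closure {b, c}) := by
  have hwords := Subgroup.closure_subset_range_pow_mul_pow_mul_pow (one_pow 3) b_pow_two c_pow_two
    (by simp) (Commute.one_left c) commute_b_c
  rw [Subgroup.closure_insert_one] at hwords
  exact ((Set.finite_range _).subset hwords).to_subtype

end Amalgam

theorem stmt_18 (a b c : PresentedGroup amalgamRels)
    (ha : a = PresentedGroup.of (rels := amalgamRels) 0)
    (hb : b = PresentedGroup.of (rels := amalgamRels) 1)
    (hc : c = PresentedGroup.of (rels := amalgamRels) 2) :
    ∃ φ : PresentedGroup amalgamRels →* Equiv.Perm (Fin 3) × Multiplicative (ZMod 2),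
      Function.Surjective φ ∧
      (φ a).2 = 1 ∧ (φ b).2 = 1 ∧ φ c = (1, Multiplicative.ofAdd (1 : ZMod 2)) ∧
      Set.InjOn φ (Subgroup.closure {a, b} : Subgroup (PresentedGroup amalgamRels)) ∧
      Set.InjOn φ (Subgroup.closure {b, c} : Subgroup (PresentedGroup amalgamRels)) ∧
      Monoid.IsTorsionFree ↥φ.ker ∧ φ.ker.Normal ∧ φ.ker.index = 12 ∧
      Nonempty (↥φ.ker ≃* FreeGroup (Fin 2)) := by
  obtain rfl : a = Amalgam.a := ha
  obtain rfl : b = Amalgam.b := hb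
  obtain rfl : c = Amalgam.c := hc
  open Amalgam in
  exact ⟨φ, φ_surjective, by rw [φ_a], by rw [φ_b], φ_c,
    φ.injOn_of_isMulTorsionFree_ker _, φ.injOn_of_isMulTorsionFree_ker _,
    fun _ hg => not_isOfFinOrder_of_isMulTorsionFree hg, φ.normal_ker, index_ker_φ, ⟨kerEquiv⟩⟩
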